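/- The group ⟨a, b | a³, b³, (ab)³, (ab⁻¹)³⟩ is isomorphic to the Heisenberg group over ℤ/3ℤ, i.e., the group of 3×3 upper unitriangular matrices over ℤ/3ℤ; in particular it has order 27. -/

import Mathlib

/-!
Write `c = y⁻¹ x⁻¹ y x`. The relations `y³ = (xy)³ = (xy⁻¹)³ = 1` force `x` to commute with `c`;
by the symmetry `(x, y) ↦ (y, x)` of the relations so does `y`. Then `x⁻¹ y x = y c` gives
`1 = x⁻¹ y³ x = y³ c³ = c³`, and `y x = x y c` lets every word in `x, y` be brought to the form
`xⁱ yʲ cᵏ` with `0 ≤ i, j, k < 3`: a group generated by such a pair has at most 27 elements.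
In the Heisenberg group over `ℤ/3ℤ`, of order 27 and exponent 3, the two elementary unipotent
matrices satisfy the relations and generate, so the presented group maps onto it and the
surjection is a bijection by counting.
-/

open FreeGroup Matrix

/-- The monoid of 3×3 upper unitriangular matrices over `R` (which is in fact a
group under matrix multiplication): the Heisenberg group over `R`. -/
def Heisenberg (R : Type) [CommRing R] : Submonoid (Matrix (Fin 3) (Fin 3) R) where
  carrier := {M | M 0 0 = 1 ∧ M 1 1 = 1 ∧ M 2 2 = 1 ∧ M 1 0 = 0 ∧ M 2 0 = 0 ∧ M 2 1 = 0}
  one_mem' := by simp [Matrix.one_apply]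
  mul_mem' := by
    rintro A B ⟨hA1, hA2, hA3, hA4, hA5, hA6⟩ ⟨hB1, hB2, hB3, hB4, hB5, hB6⟩
    refine ⟨?_, ?_, ?_, ?_, ?_, ?_⟩ <;>
      simp [Matrix.mul_apply, Fin.sum_univ_three, hA1, hA2, hA3, hA4, hA5, hA6,
        hB1, hB2, hB3, hB4, hB5, hB6]

structure IsHeisenbergPair {G : Type*} [Group G] (x y : G) : Prop where
  pow_three_left : x ^ 3 = 1
  pow_three_right : y ^ 3 = 1
  mul_pow_three : (x * y) ^ 3 = 1
  mul_inv_pow_three : (x * y⁻¹) ^ 3 = 1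

theorem mul_mul_eq_of_mul_pow_three_eq_one {G : Type*} [Group G] {u v : G}
    (h : (u * v) ^ 3 = 1) : u * v * u = v⁻¹ * u⁻¹ * v⁻¹ := by
  rw [← mul_inv_eq_one, ← h, pow_three]
  group

namespace IsHeisenbergPair

variable {G : Type*} [Group G] {x y : G}

theorem swap (h : IsHeisenbergPair x y) : IsHeisenbergPair y x where
  pow_three_left := h.pow_three_right
  pow_three_right := h.pow_three_left
  mul_pow_three := by
    rw [show (y * x) ^ 3 = x⁻¹ * (x * y) ^ 3 * x by simp only [pow_three]; group,
      h.mul_pow_three]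
    group
  mul_inv_pow_three := by
    rw [show (y * x⁻¹) ^ 3 = ((x * y⁻¹) ^ 3)⁻¹ by simp only [pow_three]; group,
      h.mul_inv_pow_three, inv_one]

theorem commute_left_commutator (h : IsHeisenbergPair x y) :
    Commute x (y⁻¹ * x⁻¹ * y * x) := by
  have hy : y⁻¹ * y⁻¹ = y := by
    rw [← mul_one (y⁻¹ * y⁻¹), ← h.pow_three_right, pow_three]
    group
  have hxy : x * y * x = y⁻¹ * x⁻¹ * y⁻¹ := mul_mul_eq_of_mul_pow_three_eq_one h.mul_pow_three
  have hxy' : x⁻¹ * y * x⁻¹ = y⁻¹ * x * y⁻¹ := by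
    simpa [mul_assoc] using
      congrArg (·⁻¹) (mul_mul_eq_of_mul_pow_three_eq_one h.mul_inv_pow_three)
  calc x * (y⁻¹ * x⁻¹ * y * x)
      = x * y⁻¹ * (x⁻¹ * y * x⁻¹) * (x * x) := by group
    _ = x * (y⁻¹ * y⁻¹) * (x * y⁻¹ * x * x) := by rw [hxy']; group
    _ = (x * y * x) * (y⁻¹ * (x * x)) := by rw [hy]; group
    _ = y⁻¹ * x⁻¹ * (y⁻¹ * y⁻¹) * (x * x) := by rw [hxy]; group
    _ = y⁻¹ * x⁻¹ * y * x * x := by rw [hy]; group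

theorem commute_right_commutator (h : IsHeisenbergPair x y) :
    Commute y (y⁻¹ * x⁻¹ * y * x) := by
  rw [show y⁻¹ * x⁻¹ * y * x = (x⁻¹ * y⁻¹ * x * y)⁻¹ by group]
  exact h.swap.commute_left_commutator.inv_right

theorem commutator_pow_three (h : IsHeisenbergPair x y) : (y⁻¹ * x⁻¹ * y * x) ^ 3 = 1 :=
  calc (y⁻¹ * x⁻¹ * y * x) ^ 3
      = (y * (y⁻¹ * x⁻¹ * y * x)) ^ 3 := by
        rw [h.commute_right_commutator.mul_pow, h.pow_three_right, one_mul]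
    _ = x⁻¹ * y ^ 3 * x := by simp only [pow_three]; group
    _ = 1 := by rw [h.pow_three_right]; group

theorem right_mul_left_pow_eq (h : IsHeisenbergPair x y) (n : ℕ) :
    y * x ^ n = x ^ n * y * (y⁻¹ * x⁻¹ * y * x) ^ n := by
  set c := y⁻¹ * x⁻¹ * y * x with hc
  have hyx : y * x = x * y * c := by rw [hc]; group
  have hxc : Commute x c := h.commute_left_commutator
  clear_value c
  induction n with
  | zero => simp
  | succ n ih =>
    calc y * x ^ (n + 1) = x ^ n * (y * x) * c ^ n := by
          rw [pow_succ, ← mul_assoc, ih, mul_assoc _ (c ^ n),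
            (hxc.pow_right n).symm.eq]; group
      _ = x ^ (n + 1) * y * c ^ (n + 1) := by rw [hyx, pow_succ, pow_succ']; group

theorem exists_eq_pow_mul_pow_mul_pow (h : IsHeisenbergPair x y)
    (hgen : Subgroup.closure {x, y} = ⊤) (g : G) :
    ∃ i j k : ℕ, g = x ^ i * y ^ j * (y⁻¹ * x⁻¹ * y * x) ^ k := by
  have hyx := h.right_mul_left_pow_eq
  have hyc := h.commute_right_commutator
  set c := y⁻¹ * x⁻¹ * y * x
  clear_value c
  have mul_left : ∀ s ∈ ({x, y} : Set G), ∀ g : G,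
      (∃ i j k : ℕ, g = x ^ i * y ^ j * c ^ k) → ∃ i j k : ℕ, s * g = x ^ i * y ^ j * c ^ k := by
    rintro s (rfl | rfl) g ⟨i, j, k, rfl⟩
    · exact ⟨i + 1, j, k, by rw [pow_succ']; group⟩
    · refine ⟨i, j + 1, k + i, ?_⟩
      rw [← mul_assoc, ← mul_assoc, hyx, mul_assoc _ (c ^ i), (hyc.pow_pow j i).symm.eq,
        pow_succ', pow_add]
      group
  have inv_eq : ∀ s ∈ ({x, y} : Set G), s⁻¹ = s * s := by
    rintro s (rfl | rfl)
    · exact inv_eq_of_mul_eq_one_right (by rw [← h.pow_three_left, pow_three])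
    · exact inv_eq_of_mul_eq_one_right (by rw [← h.pow_three_right, pow_three])
  induction (hgen ▸ Subgroup.mem_top g : g ∈ Subgroup.closure {x, y})
    using Subgroup.closure_induction_left with
  | one => exact ⟨0, 0, 0, by simp⟩
  | mul_left s hs g _ ih => exact mul_left s hs g ih
  | inv_mul_cancel s hs g _ ih =>
    rw [inv_eq s hs, mul_assoc]
    exact mul_left s hs _ (mul_left s hs g ih)

theorem surjective_pow_mul_pow_mul_pow (h : IsHeisenbergPair x y)
    (hgen : Subgroup.closure {x, y} = ⊤) :
    Function.Surjective fun t : Fin 3 × Fin 3 × Fin 3 ↦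
      x ^ (t.1 : ℕ) * y ^ (t.2.1 : ℕ) * (y⁻¹ * x⁻¹ * y * x) ^ (t.2.2 : ℕ) := by
  intro g
  obtain ⟨i, j, k, rfl⟩ := h.exists_eq_pow_mul_pow_mul_pow hgen g
  refine ⟨(Fin.ofNat 3 i, Fin.ofNat 3 j, Fin.ofNat 3 k), ?_⟩
  simp only [Fin.val_ofNat, ← pow_eq_pow_mod _ h.pow_three_left,
    ← pow_eq_pow_mod _ h.pow_three_right, ← pow_eq_pow_mod _ h.commutator_pow_three]

theorem finite (h : IsHeisenbergPair x y) (hgen : Subgroup.closure {x, y} = ⊤) : Finite G :=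
  Finite.of_surjective _ (h.surjective_pow_mul_pow_mul_pow hgen)

theorem nat_card_le (h : IsHeisenbergPair x y) (hgen : Subgroup.closure {x, y} = ⊤) :
    Nat.card G ≤ 27 :=
  (Nat.card_le_card_of_surjective _ (h.surjective_pow_mul_pow_mul_pow hgen)).trans (by simp)

end IsHeisenbergPair

@[ext]
structure HeisenbergTriple (R : Type*) where
  x : R
  y : R
  z : R
deriving DecidableEq, Fintype

namespace HeisenbergTriple

variable {R : Type*} [CommRing R]

instance : Mul (HeisenbergTriple R) := ⟨fun g h ↦ ⟨g.x + h.x, g.y + h.y, g.z + h.z + g.x * h.y⟩⟩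
instance : One (HeisenbergTriple R) := ⟨⟨0, 0, 0⟩⟩
instance : Inv (HeisenbergTriple R) := ⟨fun g ↦ ⟨-g.x, -g.y, -g.z + g.x * g.y⟩⟩

theorem mul_def (g h : HeisenbergTriple R) :
    g * h = ⟨g.x + h.x, g.y + h.y, g.z + h.z + g.x * h.y⟩ := rfl
theorem one_def : (1 : HeisenbergTriple R) = ⟨0, 0, 0⟩ := rfl
theorem inv_def (g : HeisenbergTriple R) : g⁻¹ = ⟨-g.x, -g.y, -g.z + g.x * g.y⟩ := rfl

instance : Group (HeisenbergTriple R) where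
  mul_assoc g h k := by ext <;> simp only [mul_def] <;> ring
  one_mul g := by ext <;> simp [mul_def, one_def]
  mul_one g := by ext <;> simp [mul_def, one_def]
  inv_mul_cancel g := by ext <;> simp only [mul_def, one_def, inv_def] <;> ring

def toMatrix (g : HeisenbergTriple R) : Matrix (Fin 3) (Fin 3) R :=
  !![1, g.x, g.z; 0, 1, g.y; 0, 0, 1]

theorem toMatrix_mem_heisenberg {R : Type} [CommRing R] (g : HeisenbergTriple R) :
    g.toMatrix ∈ Heisenberg R := by
  simp [Heisenberg, toMatrix]

theorem toMatrix_mul (g h : HeisenbergTriple R) : (g * h).toMatrix = g.toMatrix * h.toMatrix := by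
  simp only [toMatrix, mul_fin_three, mul_def]
  ring_nf

def mulEquivHeisenberg (R : Type) [CommRing R] : HeisenbergTriple R ≃* Heisenberg R where
  toFun g := ⟨g.toMatrix, g.toMatrix_mem_heisenberg⟩
  invFun M := ⟨M.1 0 1, M.1 1 2, M.1 0 2⟩
  left_inv g := by simp [toMatrix]
  right_inv := by
    rintro ⟨M, h00, h11, h22, h10, h20, h21⟩
    ext i j
    fin_cases i <;> fin_cases j <;> simp [toMatrix, h00, h11, h22, h10, h20, h21]
  map_mul' g h := Subtype.ext (toMatrix_mul g h)

def a : HeisenbergTriple (ZMod 3) := ⟨1, 0, 0⟩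
def b : HeisenbergTriple (ZMod 3) := ⟨0, 1, 0⟩

theorem pow_three_eq_one (g : HeisenbergTriple (ZMod 3)) : g ^ 3 = 1 := by
  revert g; decide

theorem exists_eq_a_pow_mul_b_pow_mul_pow (g : HeisenbergTriple (ZMod 3)) :
    ∃ i j k : Fin 3, g = a ^ (i : ℕ) * b ^ (j : ℕ) * (b⁻¹ * a⁻¹ * b * a) ^ (k : ℕ) := by
  revert g; decide

theorem nat_card_zmod_three : Nat.card (HeisenbergTriple (ZMod 3)) = 27 := by
  rw [Nat.card_eq_fintype_card]; decide

end HeisenbergTriple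

def heisenbergRels : Set (FreeGroup (Fin 2)) :=
  {of 0 ^ 3, of 1 ^ 3, (of 0 * of 1) ^ 3, (of 0 * (of 1)⁻¹) ^ 3}

namespace PresentedGroup

open HeisenbergTriple

theorem isHeisenbergPair_of :
    IsHeisenbergPair (of 0 : PresentedGroup heisenbergRels) (of 1) := by
  refine ⟨?_, ?_, ?_, ?_⟩
  · exact one_of_mem (x := FreeGroup.of 0 ^ 3) (by simp [heisenbergRels])
  · exact one_of_mem (x := FreeGroup.of 1 ^ 3) (by simp [heisenbergRels])
  · exact one_of_mem (x := (FreeGroup.of 0 * FreeGroup.of 1) ^ 3) (by simp [heisenbergRels])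
  · exact one_of_mem (x := (FreeGroup.of 0 * (FreeGroup.of 1)⁻¹) ^ 3)
      (by simp [heisenbergRels])

theorem closure_of_zero_one :
    Subgroup.closure {of 0, of 1} = (⊤ : Subgroup (PresentedGroup heisenbergRels)) := by
  rw [← closure_range_of heisenbergRels]
  congr 1
  ext
  simp [Fin.exists_fin_two, eq_comm]

def toHeisenbergTriple : PresentedGroup heisenbergRels →* HeisenbergTriple (ZMod 3) :=
  toGroup (f := ![a, b]) (by rintro r (rfl | rfl | rfl | rfl) <;>
    simp only [map_pow, pow_three_eq_one])

theorem toHeisenbergTriple_surjective : Function.Surjective toHeisenbergTriple := by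
  intro g
  obtain ⟨i, j, k, rfl⟩ := exists_eq_a_pow_mul_b_pow_mul_pow g
  exact ⟨of 0 ^ (i : ℕ) * of 1 ^ (j : ℕ) * ((of 1)⁻¹ * (of 0)⁻¹ * of 1 * of 0) ^ (k : ℕ),
    by simp [toHeisenbergTriple]⟩

theorem toHeisenbergTriple_bijective : Function.Bijective toHeisenbergTriple :=
  have := isHeisenbergPair_of.finite closure_of_zero_one
  toHeisenbergTriple_surjective.bijective_of_nat_card_le <|
    (isHeisenbergPair_of.nat_card_le closure_of_zero_one).trans nat_card_zmod_three.ge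

noncomputable def mulEquivHeisenbergTriple :
    PresentedGroup heisenbergRels ≃* HeisenbergTriple (ZMod 3) :=
  MulEquiv.ofBijective _ toHeisenbergTriple_bijective

end PresentedGroup

/-- The group `⟨a, b | a³, b³, (ab)³, (ab⁻¹)³⟩` is isomorphic to the Heisenberg group
over `ℤ/3ℤ` (the 3×3 upper unitriangular matrices over `ℤ/3ℤ`); in particular it has
order 27. -/
theorem stmt_2 :
    letI N : Subgroup (FreeGroup (Fin 2)) := Subgroup.normalClosure
      {(of 0 : FreeGroup (Fin 2)) ^ 3, (of 1 : FreeGroup (Fin 2)) ^ 3,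
        (of 0 * of 1 : FreeGroup (Fin 2)) ^ 3,
        (of 0 * (of 1)⁻¹ : FreeGroup (Fin 2)) ^ 3}
    Nonempty ((FreeGroup (Fin 2) ⧸ N) ≃* Heisenberg (ZMod 3)) ∧
      Nat.card (FreeGroup (Fin 2) ⧸ N) = 27 :=
  ⟨⟨PresentedGroup.mulEquivHeisenbergTriple.trans (HeisenbergTriple.mulEquivHeisenberg _)⟩,
    (Nat.card_congr PresentedGroup.mulEquivHeisenbergTriple.toEquiv).trans
      HeisenbergTriple.nat_card_zmod_three⟩
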